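/- Let n ≥ 1, f ∈ Matₙ(ℂ) the matrix with (i+1,i) entries 1 and all other entries 0, and b the subspace of upper triangular matrices. The restriction map from conjugation-invariant polynomial functions on Matₙ(ℂ) to N-invariant polynomial functions on f + b is bijective: (1) a conjugation-invariant polynomial function on Matₙ(ℂ) vanishing on f + b is identically zero; (2) every N-invariant polynomial function on f + b is the restriction of a conjugation-invariant polynomial function on Matₙ(ℂ). -/

import Mathlib

open Matrix

/-- Evaluation of a polynomial in the `n²` matrix entries at a matrix `A`:
a polynomial function on `Matₙ(ℂ)`. -/
noncomputable def evalMat {n : ℕ} (P : MvPolynomial (Fin n × Fin n) ℂ)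
    (A : Matrix (Fin n) (Fin n) ℂ) : ℂ :=
  MvPolynomial.eval (fun q => A q.1 q.2) P

/-- The principal nilpotent matrix `f`, with entries `1` on the subdiagonal
and `0` elsewhere. -/
def fMat (n : ℕ) : Matrix (Fin n) (Fin n) ℂ :=
  Matrix.of fun i j => if (i : ℕ) = (j : ℕ) + 1 then 1 else 0

/-- A unipotent upper triangular matrix: upper triangular with all diagonal
entries equal to `1` (an element of the group `N`). -/
def IsUniUpper {n : ℕ} (u : Matrix (Fin n) (Fin n) ℂ) : Prop :=
  u.BlockTriangular id ∧ ∀ i : Fin n, u i i = 1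

/-- Membership in the affine subspace `f + b`, where `b` is the space of upper
triangular matrices. -/
def InFB {n : ℕ} (y : Matrix (Fin n) (Fin n) ℂ) : Prop :=
  (y - fMat n).BlockTriangular id

/-!
Let `K(A)` be the Krylov matrix with columns `e₀, A e₀, …, A^(n-1) e₀` and `C(A)` the companion
matrix of the characteristic polynomial of `A`. Cayley–Hamilton gives `A K(A) = K(A) C(A)`, and
`C(A)` always lies in `f + b`. For `x ∈ f + b` the matrix `K(x)` lies in `N`, so `x` is
`N`-conjugate to `C(x)`.

Surjectivity: for `N`-invariant `P`, the polynomial `A ↦ P(C(A))` is conjugation invariant (it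
only depends on the characteristic polynomial) and agrees with `P` on `f + b`.

Injectivity: a conjugation-invariant `P` vanishing on `f + b` vanishes wherever `det K(A) ≠ 0`,
since there `A` is conjugate to `C(A)`. So `P · det K = 0` as a polynomial, and `det K ≠ 0`
because it takes the value `1` at `f`.
-/

open MvPolynomial

namespace Matrix

variable {R S : Type*} [CommRing R] [CommRing S] {n : ℕ}

def krylov (A : Matrix (Fin n) (Fin n) R) (v : Fin n → R) : Matrix (Fin n) (Fin n) R :=
  of fun i j => (A ^ (j : ℕ) *ᵥ v) i

def companion (p : Polynomial R) : Matrix (Fin n) (Fin n) R :=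
  of fun i j => if (j : ℕ) + 1 = n then -p.coeff i else if (i : ℕ) = j + 1 then 1 else 0

theorem krylov_map (A : Matrix (Fin n) (Fin n) R) (v : Fin n → R) (f : R →+* S) :
    (krylov A v).map f = krylov (A.map f) (f ∘ v) := by
  ext i j
  simp only [krylov, map_apply, of_apply, RingHom.map_mulVec]
  rw [← RingHom.mapMatrix_apply, map_pow]
  rfl

theorem companion_map (p : Polynomial R) (f : R →+* S) :
    (companion p : Matrix (Fin n) (Fin n) R).map f = companion (p.map f) := by
  ext i j
  simp only [companion, map_apply, of_apply, Polynomial.coeff_map, apply_ite f, map_neg, map_one,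
    map_zero]

theorem pow_card_eq_neg_sum [Nontrivial R] (A : Matrix (Fin n) (Fin n) R) :
    A ^ n = -∑ k ∈ Finset.range n, A.charpoly.coeff k • A ^ k := by
  have h := A.aeval_self_charpoly
  rw [Polynomial.aeval_eq_sum_range, charpoly_natDegree_eq_dim, Fintype.card_fin,
    Finset.sum_range_succ] at h
  have hn : A.charpoly.coeff n = 1 := by
    simpa using A.charpoly_monic.coeff_natDegree
  rw [hn, one_smul] at h
  exact eq_neg_of_add_eq_zero_right h

theorem mul_krylov [Nontrivial R] (A : Matrix (Fin n) (Fin n) R) (v : Fin n → R) :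
    A * krylov A v = krylov A v * companion A.charpoly := by
  ext i j
  have hcol : (A * krylov A v) i j = (A ^ ((j : ℕ) + 1) *ᵥ v) i := by
    rw [pow_succ', ← mulVec_mulVec]; rfl
  rw [hcol, mul_apply]
  by_cases hj : (j : ℕ) + 1 = n
  · simp only [krylov, companion, of_apply, hj, if_true]
    rw [pow_card_eq_neg_sum, neg_mulVec, sum_mulVec, Pi.neg_apply, Finset.sum_apply,
      Fin.sum_univ_eq_sum_range (fun k => (A ^ k *ᵥ v) i * -A.charpoly.coeff k) n,
      ← Finset.sum_neg_distrib]
    refine Finset.sum_congr rfl fun k _ => ?_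
    simp only [smul_mulVec, Pi.smul_apply, smul_eq_mul]
    ring
  · have hj' : (j : ℕ) + 1 < n := by omega
    rw [Finset.sum_eq_single ⟨(j : ℕ) + 1, hj'⟩]
    · simp [krylov, companion, hj]
    · intro k _ hk
      simp only [companion, of_apply, hj, if_false]
      rw [if_neg fun h => hk (Fin.ext h), mul_zero]
    · simp

theorem eq_conj_companion_of_isUnit [Nontrivial R] {A : Matrix (Fin n) (Fin n) R}
    {v : Fin n → R} (h : IsUnit (krylov A v)) :
    A = (h.unit : Matrix (Fin n) (Fin n) R) * companion A.charpoly *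
      ((h.unit⁻¹ : (Matrix (Fin n) (Fin n) R)ˣ) : Matrix (Fin n) (Fin n) R) := by
  rw [Units.eq_mul_inv_iff_mul_eq, IsUnit.unit_spec]
  exact mul_krylov A v

end Matrix

variable {n : ℕ}

theorem IsUniUpper.det_eq_one {u : Matrix (Fin n) (Fin n) ℂ} (hu : IsUniUpper u) : u.det = 1 := by
  rw [det_of_isUpperTriangular hu.1]
  simp [hu.2]

theorem inFB_fMat : InFB (fMat n) := by
  simp [InFB, BlockTriangular]

theorem InFB.apply_of_lt {x : Matrix (Fin n) (Fin n) ℂ} (hx : InFB x) {i j : Fin n} (h : j < i) :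
    x i j = if (i : ℕ) = j + 1 then 1 else 0 := by
  have hij := hx h
  rw [Matrix.sub_apply, sub_eq_zero] at hij
  simpa [fMat] using hij

theorem companion_inFB (p : Polynomial ℂ) : InFB (companion p : Matrix (Fin n) (Fin n) ℂ) := by
  intro i j (hij : (j : ℕ) < i)
  have hj : (j : ℕ) + 1 ≠ n := by omega
  by_cases h : (i : ℕ) = j + 1 <;> simp [companion, fMat, hj, h]

theorem InFB.pow_apply_zero [NeZero n] {x : Matrix (Fin n) (Fin n) ℂ} (hx : InFB x) (m : ℕ)
    {i : Fin n} (hi : m ≤ i) : (x ^ m) i 0 = if (i : ℕ) = m then 1 else 0 := by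
  induction m generalizing i with
  | zero => simp [one_apply, ← Fin.val_eq_zero_iff]
  | succ m ih =>
    have hm : m < n := by omega
    rw [pow_succ', mul_apply, Finset.sum_eq_single ⟨m, hm⟩]
    · rw [ih le_rfl, if_pos rfl, mul_one, hx.apply_of_lt (Fin.lt_def.2 (Nat.lt_of_succ_le hi))]
    · intro k _ hk
      have hkm : (k : ℕ) ≠ m := fun h => hk (Fin.ext h)
      rcases lt_or_gt_of_ne hkm with hkm | hkm
      · rw [hx.apply_of_lt (Fin.lt_def.2 (by omega)), if_neg (by omega), zero_mul]
      · rw [ih hkm.le, if_neg (by omega), mul_zero]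
    · simp

theorem InFB.isUniUpper_krylov [NeZero n] {x : Matrix (Fin n) (Fin n) ℂ} (hx : InFB x) :
    IsUniUpper (krylov x (Pi.single 0 1)) := by
  refine ⟨fun i j (hij : (j : ℕ) < i) => ?_, fun i => ?_⟩
  · simp [krylov, hx.pow_apply_zero j hij.le, hij.ne']
  · simp [krylov, hx.pow_apply_zero i le_rfl]

theorem InFB.exists_uniUpper_conj_companion [NeZero n] {x : Matrix (Fin n) (Fin n) ℂ}
    (hx : InFB x) :
    ∃ u : (Matrix (Fin n) (Fin n) ℂ)ˣ, IsUniUpper (u : Matrix (Fin n) (Fin n) ℂ) ∧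
      x = (u : Matrix (Fin n) (Fin n) ℂ) * companion x.charpoly *
        ((u⁻¹ : (Matrix (Fin n) (Fin n) ℂ)ˣ) : Matrix (Fin n) (Fin n) ℂ) := by
  have hK : IsUnit (krylov x (Pi.single 0 1)) := by
    rw [isUnit_iff_isUnit_det, hx.isUniUpper_krylov.det_eq_one]
    exact isUnit_one
  refine ⟨hK.unit, ?_, eq_conj_companion_of_isUnit hK⟩
  rw [hK.unit_spec]
  exact hx.isUniUpper_krylov

def IsConjInvariant (P : MvPolynomial (Fin n × Fin n) ℂ) : Prop :=
  ∀ (g : (Matrix (Fin n) (Fin n) ℂ)ˣ) (A : Matrix (Fin n) (Fin n) ℂ),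
    evalMat P ((g : Matrix (Fin n) (Fin n) ℂ) * A *
      ((g⁻¹ : (Matrix (Fin n) (Fin n) ℂ)ˣ) : Matrix (Fin n) (Fin n) ℂ)) = evalMat P A

theorem evalMat_funext {P Q : MvPolynomial (Fin n × Fin n) ℂ}
    (h : ∀ A, evalMat P A = evalMat Q A) : P = Q :=
  MvPolynomial.funext fun v => h (of fun i j => v (i, j))

theorem evalMat_zero (A : Matrix (Fin n) (Fin n) ℂ) : evalMat 0 A = 0 :=
  map_zero _

theorem evalMat_mul (P Q : MvPolynomial (Fin n × Fin n) ℂ) (A : Matrix (Fin n) (Fin n) ℂ) :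
    evalMat (P * Q) A = evalMat P A * evalMat Q A :=
  map_mul _ P Q

theorem evalMat_bind₁ (M : Matrix (Fin n) (Fin n) (MvPolynomial (Fin n × Fin n) ℂ))
    (P : MvPolynomial (Fin n × Fin n) ℂ) (A : Matrix (Fin n) (Fin n) ℂ) :
    evalMat (bind₁ (fun q => M q.1 q.2) P) A
      = evalMat P (M.map (MvPolynomial.eval fun q => A q.1 q.2)) :=
  eval₂Hom_bind₁ _ _ _ _

theorem map_eval_mvPolynomialX (A : Matrix (Fin n) (Fin n) ℂ) :
    (mvPolynomialX (Fin n) (Fin n) ℂ).map (MvPolynomial.eval fun q => A q.1 q.2) = A :=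
  mvPolynomialX_map_eval₂ _ A

theorem evalMat_det_krylov_mvPolynomialX [NeZero n] (A : Matrix (Fin n) (Fin n) ℂ) :
    evalMat (krylov (mvPolynomialX (Fin n) (Fin n) ℂ) (Pi.single 0 1)).det A
      = (krylov A (Pi.single 0 1)).det := by
  rw [evalMat, RingHom.map_det, RingHom.mapMatrix_apply, krylov_map, map_eval_mvPolynomialX]
  congr 2
  funext i
  simp [Pi.single_apply, apply_ite]

theorem IsConjInvariant.eq_zero_of_inFB [NeZero n] {P : MvPolynomial (Fin n × Fin n) ℂ}
    (hP : IsConjInvariant P) (hfb : ∀ x, InFB x → evalMat P x = 0) : P = 0 := by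
  have hD : (krylov (mvPolynomialX (Fin n) (Fin n) ℂ) (Pi.single 0 1)).det ≠ 0 := fun h => by
    have h1 := evalMat_det_krylov_mvPolynomialX (fMat n)
    rw [inFB_fMat.isUniUpper_krylov.det_eq_one, h, evalMat_zero] at h1
    exact zero_ne_one h1
  have hPD : P * (krylov (mvPolynomialX (Fin n) (Fin n) ℂ) (Pi.single 0 1)).det = 0 := by
    refine evalMat_funext fun A => ?_
    rw [evalMat_mul, evalMat_det_krylov_mvPolynomialX, evalMat_zero]
    by_cases hK : IsUnit (krylov A (Pi.single 0 1)).det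
    · rw [eq_conj_companion_of_isUnit ((isUnit_iff_isUnit_det _).2 hK), hP,
        hfb _ (companion_inFB _), zero_mul]
    · rw [isUnit_iff_ne_zero, not_not] at hK
      rw [hK, mul_zero]
  exact (mul_eq_zero.1 hPD).resolve_right hD

noncomputable def compCompanion (P : MvPolynomial (Fin n × Fin n) ℂ) :
    MvPolynomial (Fin n × Fin n) ℂ :=
  bind₁ (fun q => (companion (mvPolynomialX (Fin n) (Fin n) ℂ).charpoly :
    Matrix (Fin n) (Fin n) (MvPolynomial (Fin n × Fin n) ℂ)) q.1 q.2) P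

theorem evalMat_compCompanion (P : MvPolynomial (Fin n × Fin n) ℂ)
    (A : Matrix (Fin n) (Fin n) ℂ) :
    evalMat (compCompanion P) A = evalMat P (companion A.charpoly) := by
  rw [compCompanion, evalMat_bind₁, companion_map, ← charpoly_map, map_eval_mvPolynomialX]

theorem isConjInvariant_compCompanion (P : MvPolynomial (Fin n × Fin n) ℂ) :
    IsConjInvariant (compCompanion P) := fun g A => by
  rw [evalMat_compCompanion, evalMat_compCompanion, coe_units_inv, charpoly_units_conj]

theorem evalMat_compCompanion_of_inFB [NeZero n] {P : MvPolynomial (Fin n × Fin n) ℂ}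
    (hP : ∀ (u : (Matrix (Fin n) (Fin n) ℂ)ˣ) (x : Matrix (Fin n) (Fin n) ℂ),
      IsUniUpper (u : Matrix (Fin n) (Fin n) ℂ) → InFB x →
      evalMat P ((u : Matrix (Fin n) (Fin n) ℂ) * x *
        ((u⁻¹ : (Matrix (Fin n) (Fin n) ℂ)ˣ) : Matrix (Fin n) (Fin n) ℂ)) = evalMat P x)
    {x : Matrix (Fin n) (Fin n) ℂ} (hx : InFB x) :
    evalMat (compCompanion P) x = evalMat P x := by
  obtain ⟨u, hu, hxu⟩ := hx.exists_uniUpper_conj_companion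
  rw [evalMat_compCompanion, ← hP u _ hu (companion_inFB _), ← hxu]

/-- The restriction map from conjugation-invariant polynomial functions on
`Matₙ(ℂ)` to `N`-invariant polynomial functions on `f + b` is bijective:
(1) a conjugation-invariant polynomial function vanishing on `f + b` vanishes
identically; (2) every `N`-invariant polynomial function on `f + b` is the
restriction of a conjugation-invariant polynomial function on `Matₙ(ℂ)`. -/
theorem invariant_polynomials_restrict_iso_fb (n : ℕ) (hn : 1 ≤ n) :
    (∀ P : MvPolynomial (Fin n × Fin n) ℂ,
      (∀ (g : (Matrix (Fin n) (Fin n) ℂ)ˣ) (A : Matrix (Fin n) (Fin n) ℂ),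
        evalMat P ((g : Matrix (Fin n) (Fin n) ℂ) * A *
          ((g⁻¹ : (Matrix (Fin n) (Fin n) ℂ)ˣ) : Matrix (Fin n) (Fin n) ℂ)) = evalMat P A) →
      (∀ x : Matrix (Fin n) (Fin n) ℂ, InFB x → evalMat P x = 0) →
      ∀ A : Matrix (Fin n) (Fin n) ℂ, evalMat P A = 0) ∧
    (∀ P : MvPolynomial (Fin n × Fin n) ℂ,
      (∀ (u : (Matrix (Fin n) (Fin n) ℂ)ˣ) (x : Matrix (Fin n) (Fin n) ℂ),
        IsUniUpper (u : Matrix (Fin n) (Fin n) ℂ) → InFB x →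
        evalMat P ((u : Matrix (Fin n) (Fin n) ℂ) * x *
          ((u⁻¹ : (Matrix (Fin n) (Fin n) ℂ)ˣ) : Matrix (Fin n) (Fin n) ℂ)) = evalMat P x) →
      ∃ Q : MvPolynomial (Fin n × Fin n) ℂ,
        (∀ (g : (Matrix (Fin n) (Fin n) ℂ)ˣ) (A : Matrix (Fin n) (Fin n) ℂ),
          evalMat Q ((g : Matrix (Fin n) (Fin n) ℂ) * A *
            ((g⁻¹ : (Matrix (Fin n) (Fin n) ℂ)ˣ) : Matrix (Fin n) (Fin n) ℂ)) = evalMat Q A) ∧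
        ∀ x : Matrix (Fin n) (Fin n) ℂ, InFB x → evalMat Q x = evalMat P x) := by
  have : NeZero n := ⟨by omega⟩
  refine ⟨fun P hP hfb A => ?_, fun P hP => ?_⟩
  · rw [IsConjInvariant.eq_zero_of_inFB hP hfb, evalMat_zero]
  · exact ⟨compCompanion P, isConjInvariant_compCompanion P,
      fun x hx => evalMat_compCompanion_of_inFB hP hx⟩
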